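/- arXiv:1810.03750 — 2 statements merged into one kernel-verified Lean document; each statement's English description precedes it below -/
import Mathlib

section
/- Let G be a graph, let D be a set of vertices of G with x ∈ D, let 0 be a vertex of G, and let ω be a subgraph (a set of 'open' edges). Suppose z₁ and z₂ are vertices such that for i = 1, 2: (i) there is an open path from x to z_i using only vertices of D, and (ii) the edge e_i = {z_i, z_i'} is pivotal for the event that x is connected to 0 by an open path (i.e., every open path from x to 0 uses the edge e_i), where z_i' ∉ D. If x is connected to 0 by an open path, then z₁ = z₂. -/
/-! If the edges `{z₁, z₁'}` and `{z₂, z₂'}` are both pivotal for `x ↔ o`, then prefixing any walk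
from `zᵢ` to `o` with the open path from `x` to `zᵢ` inside `D` gives a walk from `x` to `o`;
that prefix cannot carry the other pivotal edge since it avoids the vertex outside `D`, so every
walk from `z₁` to `o` visits `z₂` and vice versa. Hence `dist z₁ o ≥ dist z₁ z₂ + dist z₂ o` and
`dist z₂ o ≥ dist z₂ z₁ + dist z₁ o`, which forces `dist z₁ z₂ = 0`. -/

namespace SimpleGraph

variable {V : Type*} {G : SimpleGraph V}

lemma mem_edges_of_forall_mem_edges_of_support_subset {D : Set V} {x y o z z' : V}
    (w : G.Walk x y) (hw : ∀ v ∈ w.support, v ∈ D) (hz' : z' ∉ D)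
    (h : ∀ p : G.Walk x o, s(z, z') ∈ p.edges) (q : G.Walk y o) : s(z, z') ∈ q.edges := by
  have he := h (w.append q)
  rw [Walk.edges_append, List.mem_append] at he
  exact he.resolve_left fun hw' => hz' (hw _ (w.snd_mem_support_of_mem_edges hw'))

lemma dist_add_dist_le_of_forall_mem_support {u v o : V} (hr : G.Reachable u o)
    (h : ∀ q : G.Walk u o, v ∈ q.support) : G.dist u v + G.dist v o ≤ G.dist u o := by
  classical
  obtain ⟨q, hq⟩ := hr.exists_walk_length_eq_dist
  have hlen := congrArg Walk.length (q.take_spec (h q))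
  rw [Walk.length_append] at hlen
  have := G.dist_le (q.takeUntil v (h q))
  have := G.dist_le (q.dropUntil v (h q))
  omega

lemma eq_of_forall_mem_support_of_forall_mem_support {u v o : V} (hu : G.Reachable u o)
    (hv : G.Reachable v o) (huv : ∀ q : G.Walk u o, v ∈ q.support)
    (hvu : ∀ q : G.Walk v o, u ∈ q.support) : u = v := by
  have h₁ := dist_add_dist_le_of_forall_mem_support hu huv
  have h₂ := dist_add_dist_le_of_forall_mem_support hv hvu
  rw [dist_comm] at h₂
  exact (hu.trans hv.symm).dist_eq_zero_iff.mp (by omega)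

end SimpleGraph

open SimpleGraph in
theorem stmt6_general {V : Type*} (ω : SimpleGraph V)
    (D : Set V) (x o z₁ z₂ z₁' z₂' : V)
    (h1 : ∃ p : ω.Walk x z₁, ∀ v ∈ p.support, v ∈ D)
    (h2 : ∃ p : ω.Walk x z₂, ∀ v ∈ p.support, v ∈ D)
    (h1' : z₁' ∉ D) (h2' : z₂' ∉ D)
    (hpiv1 : ∀ p : ω.Walk x o, s(z₁, z₁') ∈ p.edges)
    (hpiv2 : ∀ p : ω.Walk x o, s(z₂, z₂') ∈ p.edges)
    (hconn : ω.Reachable x o) :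
    z₁ = z₂ := by
  obtain ⟨w₁, hw₁⟩ := h1
  obtain ⟨w₂, hw₂⟩ := h2
  refine eq_of_forall_mem_support_of_forall_mem_support (w₁.reverse.reachable.trans hconn)
    (w₂.reverse.reachable.trans hconn) (fun q => ?_) (fun q => ?_)
  · exact q.fst_mem_support_of_mem_edges
      (mem_edges_of_forall_mem_edges_of_support_subset w₁ hw₁ h2' hpiv2 q)
  · exact q.fst_mem_support_of_mem_edges
      (mem_edges_of_forall_mem_edges_of_support_subset w₂ hw₂ h1' hpiv1 q)

/-- Deterministic 'at most one pivotal boundary vertex' claim: if `ω` is the open subgraph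
of a graph `G`, `x ∈ D`, for `i = 1,2` there is an open path from `x` to `zᵢ` staying in `D`,
`zᵢ' ∉ D`, the edge `{zᵢ, zᵢ'}` is pivotal for `{x ↔ 0}` (every open walk from `x` to `o`
uses it), and `x` is connected to `o`, then `z₁ = z₂`. -/
theorem stmt6 {V : Type*} (G ω : SimpleGraph V) (hω : ω ≤ G)
    (D : Set V) (x o z₁ z₂ z₁' z₂' : V)
    (hxD : x ∈ D)
    (h1 : ∃ p : ω.Walk x z₁, ∀ v ∈ p.support, v ∈ D)
    (h2 : ∃ p : ω.Walk x z₂, ∀ v ∈ p.support, v ∈ D)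
    (h1' : z₁' ∉ D) (h2' : z₂' ∉ D)
    (hpiv1 : ∀ p : ω.Walk x o, s(z₁, z₁') ∈ p.edges)
    (hpiv2 : ∀ p : ω.Walk x o, s(z₂, z₂') ∈ p.edges)
    (hconn : ω.Reachable x o) :
    z₁ = z₂ :=
  stmt6_general ω D x o z₁ z₂ z₁' z₂' h1 h2 h1' h2' hpiv1 hpiv2 hconn
end

section
/- Fix d ≥ 9. There exists a constant C > 0 such that for all n ≥ 1, ∑_{x,y ∈ B(2n)} ∑_{z ∈ ℤ^d} ‖z‖^{1−d} ‖z−x‖^{2−d} ‖z−y‖^{2−d} ≤ C·n⁸, where all norms are ℓ∞ norms, with the convention ‖0‖^{a} = 1 for the terms where an argument vanishes. -/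
open scoped ENNReal

/-- `‖v‖∞^a` in `[0,∞]`, with the convention that the value at `v = 0` is `1`. -/
noncomputable def nrmPow (d : ℕ) (a : ℝ) (v : Fin d → ℤ) : ℝ≥0∞ :=
  if v = 0 then 1 else ENNReal.ofReal (‖v‖ ^ a)

/-!
Exchanging the sums, the triple sum is `∑_z ‖z‖^{1-d} S(z)²` with
`S(z) = ∑_{x ∈ B(2n)} ‖z - x‖^{2-d}`. Since the sphere of radius `k` lies in `B(k)`, which
has `(2k+1)^d` points, `∑_{v ∈ B(m)} ‖v‖^{e-d} ≤ C m^{e+1}`. Hence `S ≤ C n³` on `B(4n+1)`,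
and the part of the sum over `z ∈ B(4n+1)` is at most `C n² (C n³)² = C n⁸`. Outside
`B(4n+1)` we have `‖z - x‖ ≥ ‖z‖/2`, so `S(z) ≤ C n^d ‖z‖^{2-d}`, and the remaining part is
at most `C n^{2d} ∑_{‖z‖ > 4n+1} ‖z‖^{5-3d} ≤ C n⁸ ∑_z ‖z‖^{-d-3}`, a convergent lattice sum.
-/

open Finset

namespace LatticeBox

variable {d : ℕ}

noncomputable def box (d m : ℕ) : Finset (Fin d → ℤ) :=
  Icc (fun _ => -(m : ℤ)) (fun _ => (m : ℤ))

lemma mem_box_iff {m : ℕ} {v : Fin d → ℤ} : v ∈ box d m ↔ ‖v‖ ≤ m := by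
  simp only [box, mem_Icc, Pi.le_def, pi_norm_le_iff_of_nonneg (Nat.cast_nonneg m),
    Int.norm_eq_abs, abs_le, ← forall_and]
  exact forall_congr' fun i => by
    constructor <;> rintro ⟨h₁, h₂⟩ <;> constructor <;> norm_cast at *

lemma card_box (d m : ℕ) : #(box d m) = (2 * m + 1) ^ d := by
  simp only [box, Pi.card_Icc, Int.card_Icc, prod_const, card_univ, Fintype.card_fin]
  congr 1
  omega

def supNorm (v : Fin d → ℤ) : ℕ := univ.sup fun i => (v i).natAbs

lemma norm_eq_supNorm (v : Fin d → ℤ) : ‖v‖ = supNorm v := by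
  simp only [Pi.norm_def, supNorm, ← NNReal.natCast_natAbs]
  norm_cast

lemma one_le_norm_of_ne_zero {v : Fin d → ℤ} (hv : v ≠ 0) : 1 ≤ ‖v‖ := by
  obtain ⟨i, hi⟩ := Function.ne_iff.mp hv
  calc (1 : ℝ) ≤ ‖v i‖ := by rw [Int.norm_eq_abs]; exact_mod_cast Int.one_le_abs hi
    _ ≤ ‖v‖ := norm_le_pi_norm v i

lemma nrmPow_eq (a : ℝ) (v : Fin d → ℤ) :
    nrmPow d a v = ENNReal.ofReal (max ‖v‖ 1 ^ a) := by
  unfold nrmPow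
  split_ifs with hv
  · simp [hv]
  · rw [max_eq_left (one_le_norm_of_ne_zero hv)]

noncomputable def radialPow (a : ℝ) (k : ℕ) : ℝ≥0∞ := ENNReal.ofReal (max (k : ℝ) 1 ^ a)

lemma nrmPow_eq_radialPow (a : ℝ) (v : Fin d → ℤ) :
    nrmPow d a v = radialPow a (supNorm v) := by
  rw [nrmPow_eq, norm_eq_supNorm, radialPow]

lemma radialPow_le_pow {a : ℝ} {e k m : ℕ} (ha : a ≤ e) (hk : k ≤ m) (hm : 1 ≤ m) :
    radialPow a k ≤ (m : ℝ≥0∞) ^ e := by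
  rw [radialPow, ← ENNReal.ofReal_natCast, ← ENNReal.ofReal_pow (Nat.cast_nonneg m)]
  refine ENNReal.ofReal_le_ofReal ?_
  have hkm : max (k : ℝ) 1 ≤ m := max_le (by exact_mod_cast hk) (by exact_mod_cast hm)
  calc max (k : ℝ) 1 ^ a ≤ max (k : ℝ) 1 ^ (e : ℝ) :=
        Real.rpow_le_rpow_of_exponent_le (le_max_right _ _) ha
    _ ≤ (m : ℝ) ^ e := by rw [Real.rpow_natCast]; gcongr

lemma tsum_radialPow_ne_top {a : ℝ} (ha : a < -1) : ∑' k, radialPow a k ≠ ⊤ := by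
  have hsum : Summable fun k : ℕ => max (k : ℝ) 1 ^ a := by
    rw [← summable_nat_add_iff 1]
    refine ((summable_nat_add_iff 1).mpr (Real.summable_nat_rpow.mpr ha)).congr fun k => ?_
    push_cast
    rw [max_eq_left (by linarith [k.cast_nonneg (α := ℝ)])]
  simp only [radialPow]
  rw [← ENNReal.ofReal_tsum_of_nonneg (fun k => by positivity) hsum]
  exact ENNReal.ofReal_ne_top

lemma two_mul_add_one_pow_mul_radialPow_le (a : ℝ) (k : ℕ) :
    ((2 * k + 1) ^ d : ℝ≥0∞) * radialPow a k ≤ 3 ^ d * radialPow (a + d) k := by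
  have h₁ : ((2 * k + 1) ^ d : ℝ≥0∞) = ENNReal.ofReal ((2 * k + 1 : ℝ) ^ d) := by
    exact_mod_cast (ENNReal.ofReal_natCast ((2 * k + 1) ^ d)).symm
  have h₃ : (3 ^ d : ℝ≥0∞) = ENNReal.ofReal (3 ^ d) := by
    exact_mod_cast (ENNReal.ofReal_natCast (3 ^ d)).symm
  have hk : (2 * k + 1 : ℝ) ≤ 3 * max (k : ℝ) 1 := by
    linarith [le_max_left (k : ℝ) 1, le_max_right (k : ℝ) 1]
  rw [radialPow, radialPow, h₁, h₃, ← ENNReal.ofReal_mul (by positivity),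
    ← ENNReal.ofReal_mul (by positivity)]
  refine ENNReal.ofReal_le_ofReal ?_
  rw [Real.rpow_add (by positivity), Real.rpow_natCast]
  calc (2 * k + 1 : ℝ) ^ d * max (k : ℝ) 1 ^ a
      ≤ (3 * max (k : ℝ) 1) ^ d * max (k : ℝ) 1 ^ a := by gcongr
    _ = 3 ^ d * (max (k : ℝ) 1 ^ a * max (k : ℝ) 1 ^ d) := by ring

lemma sum_comp_supNorm_le (s : Finset (Fin d → ℤ)) (F : ℕ → ℝ≥0∞) :
    ∑ v ∈ s, F (supNorm v) ≤ ∑ k ∈ s.image supNorm, (2 * k + 1) ^ d * F k := by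
  rw [sum_comp]
  gcongr with k
  rw [nsmul_eq_mul]
  gcongr
  have hsub : {v ∈ s | supNorm v = k} ⊆ box d k := fun v hv => by
    rw [mem_box_iff, norm_eq_supNorm, (mem_filter.mp hv).2]
  exact_mod_cast (card_le_card hsub).trans (card_box d k).le

lemma sum_nrmPow_le (a : ℝ) (s : Finset (Fin d → ℤ)) :
    ∑ v ∈ s, nrmPow d a v ≤ 3 ^ d * ∑ k ∈ s.image supNorm, radialPow (a + d) k := by
  simp only [nrmPow_eq_radialPow, mul_sum]
  exact (sum_comp_supNorm_le s _).trans
    (sum_le_sum fun k _ => two_mul_add_one_pow_mul_radialPow_le a k)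

lemma sum_box_nrmPow_le {a : ℝ} {e : ℕ} (ha : a + d ≤ e) {m : ℕ} (hm : 1 ≤ m) :
    ∑ v ∈ box d m, nrmPow d a v ≤ 2 * 3 ^ d * (m : ℝ≥0∞) ^ (e + 1) := by
  have himage : (box d m).image supNorm ⊆ range (m + 1) := fun k hk => by
    obtain ⟨v, hv, rfl⟩ := mem_image.mp hk
    rw [mem_box_iff, norm_eq_supNorm] at hv
    exact mem_range_succ_iff.mpr (by exact_mod_cast hv)
  calc ∑ v ∈ box d m, nrmPow d a v
      ≤ 3 ^ d * ∑ k ∈ (box d m).image supNorm, radialPow (a + d) k := sum_nrmPow_le a _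
    _ ≤ 3 ^ d * ∑ _k ∈ range (m + 1), (m : ℝ≥0∞) ^ e := by
        gcongr
        exact (sum_le_sum_of_subset himage).trans (sum_le_sum fun k hk =>
          radialPow_le_pow ha (mem_range_succ_iff.mp hk) hm)
    _ = (m + 1) * 3 ^ d * (m : ℝ≥0∞) ^ e := by
        rw [sum_const, card_range, nsmul_eq_mul]; push_cast; ring
    _ ≤ (m + m) * 3 ^ d * (m : ℝ≥0∞) ^ e := by gcongr; exact_mod_cast hm
    _ = 2 * 3 ^ d * (m : ℝ≥0∞) ^ (e + 1) := by ring

lemma tsum_nrmPow_ne_top {a : ℝ} (ha : a + d < -1) :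
    ∑' v : Fin d → ℤ, nrmPow d a v ≠ ⊤ := by
  refine ne_top_of_le_ne_top (b := 3 ^ d * ∑' k, radialPow (a + d) k)
    (ENNReal.mul_ne_top (by finiteness) (tsum_radialPow_ne_top ha))
    (ENNReal.summable.tsum_le_of_sum_le fun s => ?_)
  exact (sum_nrmPow_le a s).trans (by gcongr; exact ENNReal.sum_le_tsum _)

lemma nrmPow_mul_nrmPow (a b : ℝ) (v : Fin d → ℤ) :
    nrmPow d a v * nrmPow d b v = nrmPow d (a + b) v := by
  simp only [nrmPow_eq]
  rw [← ENNReal.ofReal_mul (by positivity), ← Real.rpow_add (by positivity)]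

lemma natCast_pow_mul_nrmPow_le {M : ℕ} {v : Fin d → ℤ} (hM : (M : ℝ) ≤ ‖v‖)
    (a : ℝ) (k : ℕ) :
    (M : ℝ≥0∞) ^ k * nrmPow d a v ≤ nrmPow d (a + k) v := by
  rw [nrmPow_eq, nrmPow_eq, ← ENNReal.ofReal_natCast, ← ENNReal.ofReal_pow (Nat.cast_nonneg M),
    ← ENNReal.ofReal_mul (by positivity), Real.rpow_add (by positivity), Real.rpow_natCast,
    mul_comm]
  gcongr
  exact hM.trans (le_max_left _ _)

lemma nrmPow_sub_le {a : ℝ} (ha : a ≤ 0) {x z : Fin d → ℤ} (h : 2 * ‖x‖ ≤ ‖z‖) :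
    nrmPow d a (z - x) ≤ ENNReal.ofReal (2 ^ (-a)) * nrmPow d a z := by
  rw [nrmPow_eq, nrmPow_eq, ← ENNReal.ofReal_mul (by positivity)]
  refine ENNReal.ofReal_le_ofReal ?_
  have hhalf : max ‖z‖ 1 / 2 ≤ max ‖z - x‖ 1 := by
    rw [div_le_iff₀ two_pos]
    rcases le_total ‖z‖ 1 with h₁ | h₁
    · rw [max_eq_right h₁]; linarith [le_max_right ‖z - x‖ 1]
    · rw [max_eq_left h₁]; linarith [norm_sub_norm_le z x, le_max_left ‖z - x‖ 1]
  calc max ‖z - x‖ 1 ^ a ≤ (max ‖z‖ 1 / 2) ^ a :=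
        Real.rpow_le_rpow_of_nonpos (by positivity) hhalf ha
    _ = 2 ^ (-a) * max ‖z‖ 1 ^ a := by
        rw [Real.div_rpow (by positivity) zero_le_two, Real.rpow_neg zero_le_two]; ring

noncomputable def boxPotential (d : ℕ) (a : ℝ) (m : ℕ) (z : Fin d → ℤ) : ℝ≥0∞ :=
  ∑ x ∈ box d m, nrmPow d a (z - x)

lemma boxPotential_le_of_mem_box {a : ℝ} {p q : ℕ} {z : Fin d → ℤ} (hz : z ∈ box d p) :
    boxPotential d a q z ≤ ∑ w ∈ box d (p + q), nrmPow d a w := by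
  rw [boxPotential, ← sum_image fun x _ y _ h => sub_right_injective h]
  refine sum_le_sum_of_subset fun w hw => ?_
  obtain ⟨x, hx, rfl⟩ := mem_image.mp hw
  rw [mem_box_iff] at hz hx ⊢
  push_cast
  linarith [norm_sub_le z x]

lemma boxPotential_le_of_two_mul_le {a : ℝ} (ha : a ≤ 0) {q : ℕ} {z : Fin d → ℤ}
    (hz : 2 * (q : ℝ) ≤ ‖z‖) :
    boxPotential d a q z ≤
      ((2 * q + 1 : ℕ) : ℝ≥0∞) ^ d * ENNReal.ofReal (2 ^ (-a)) * nrmPow d a z := by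
  calc boxPotential d a q z ≤ ∑ _x ∈ box d q, ENNReal.ofReal (2 ^ (-a)) * nrmPow d a z :=
        sum_le_sum fun x hx => nrmPow_sub_le ha (by linarith [mem_box_iff.mp hx])
    _ = ((2 * q + 1 : ℕ) : ℝ≥0∞) ^ d * ENNReal.ofReal (2 ^ (-a)) * nrmPow d a z := by
        rw [sum_const, card_box, nsmul_eq_mul, mul_assoc, Nat.cast_pow]

lemma sum_sum_tsum_mul_eq {ι κ : Type*} (s : Finset ι) (f : κ → ℝ≥0∞)
    (g : ι → κ → ℝ≥0∞) :
    ∑ x ∈ s, ∑ y ∈ s, ∑' z, f z * g x z * g y z = ∑' z, f z * (∑ x ∈ s, g x z) ^ 2 := by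
  simp_rw [← Summable.tsum_finsetSum fun _ _ => ENNReal.summable]
  refine tsum_congr fun z => ?_
  simp_rw [sq, sum_mul_sum, mul_sum, mul_assoc]

lemma sum_box_nrmPow_mul_boxPotential_sq_le {n : ℕ} (hn : 1 ≤ n) :
    ∑ z ∈ box d (4 * n + 1), nrmPow d (1 - d) z * boxPotential d (2 - d) (2 * n) z ^ 2 ≤
      8 * 27 ^ d * 7 ^ 8 * (n : ℝ≥0∞) ^ 8 := by
  set S := 2 * 3 ^ d * ((6 * n + 1 : ℕ) : ℝ≥0∞) ^ 3 with hS
  have hpot : ∀ z ∈ box d (4 * n + 1), boxPotential d (2 - d) (2 * n) z ≤ S := fun z hz =>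
    (boxPotential_le_of_mem_box hz).trans <| by
      rw [show 4 * n + 1 + 2 * n = 6 * n + 1 by ring]
      exact sum_box_nrmPow_le (by simp) (by omega)
  have hP : ∑ z ∈ box d (4 * n + 1), nrmPow d (1 - d) z ≤
      2 * 3 ^ d * ((4 * n + 1 : ℕ) : ℝ≥0∞) ^ 2 :=
    sum_box_nrmPow_le (by simp) (by omega)
  have h₄ : ((4 * n + 1 : ℕ) : ℝ≥0∞) ≤ 7 * n := by
    exact_mod_cast (by omega : 4 * n + 1 ≤ 7 * n)
  have h₆ : ((6 * n + 1 : ℕ) : ℝ≥0∞) ≤ 7 * n := by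
    exact_mod_cast (by omega : 6 * n + 1 ≤ 7 * n)
  calc ∑ z ∈ box d (4 * n + 1), nrmPow d (1 - d) z * boxPotential d (2 - d) (2 * n) z ^ 2
      ≤ ∑ z ∈ box d (4 * n + 1), nrmPow d (1 - d) z * S ^ 2 :=
        sum_le_sum fun z hz => by gcongr; exact hpot z hz
    _ = (∑ z ∈ box d (4 * n + 1), nrmPow d (1 - d) z) * S ^ 2 := (sum_mul ..).symm
    _ ≤ 2 * 3 ^ d * ((4 * n + 1 : ℕ) : ℝ≥0∞) ^ 2 * S ^ 2 := by gcongr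
    _ ≤ 2 * 3 ^ d * (7 * n) ^ 2 * (2 * 3 ^ d * (7 * n) ^ 3) ^ 2 := by
        rw [hS]; gcongr
    _ = 8 * 27 ^ d * 7 ^ 8 * (n : ℝ≥0∞) ^ 8 := by
        rw [show (27 : ℝ≥0∞) ^ d = ((3 : ℝ≥0∞) ^ d) ^ 3 by
          rw [← pow_mul, mul_comm, pow_mul]; norm_num]
        ring

lemma tsum_compl_box_nrmPow_mul_boxPotential_sq_le (hd : 4 ≤ d) (n : ℕ) :
    ∑' z : ↥((box d (4 * n + 1) : Set (Fin d → ℤ))ᶜ),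
        nrmPow d (1 - d) z * boxPotential d (2 - d) (2 * n) z ^ 2 ≤
      ENNReal.ofReal (2 ^ (d - 2 : ℝ)) ^ 2 * ((4 * n + 1 : ℕ) : ℝ≥0∞) ^ 8 *
        ∑' v, nrmPow d (-d - 3) v := by
  set K := ENNReal.ofReal (2 ^ (d - 2 : ℝ))
  set M := 4 * n + 1 with hM_def
  have hd' : (4 : ℝ) ≤ d := by exact_mod_cast hd
  have hpoint : ∀ z ∉ box d M, nrmPow d (1 - d) z * boxPotential d (2 - d) (2 * n) z ^ 2 ≤
      K ^ 2 * (M : ℝ≥0∞) ^ 8 * nrmPow d (-d - 3) z := by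
    intro z hz
    have hzM : (M : ℝ) ≤ ‖z‖ := (lt_of_not_ge (mt mem_box_iff.mpr hz)).le
    have hpot := boxPotential_le_of_two_mul_le (a := 2 - d) (by linarith) (q := 2 * n)
      (z := z) (by rw [hM_def] at hzM; push_cast at hzM ⊢; linarith)
    rw [neg_sub, show 2 * (2 * n) + 1 = M by ring] at hpot
    have hM : ((M : ℝ≥0∞) ^ d) ^ 2 = (M : ℝ≥0∞) ^ 8 * (M : ℝ≥0∞) ^ (2 * d - 8) := by
      rw [← pow_mul, ← pow_add]; congr 1; omega
    have hexp : (5 - 3 * d : ℝ) + ((2 * d - 8 : ℕ) : ℝ) = -d - 3 := by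
      rw [Nat.cast_sub (by omega)]; push_cast; ring
    calc nrmPow d (1 - d) z * boxPotential d (2 - d) (2 * n) z ^ 2
        ≤ nrmPow d (1 - d) z * ((M : ℝ≥0∞) ^ d * K * nrmPow d (2 - d) z) ^ 2 := by gcongr
      _ = K ^ 2 * ((M : ℝ≥0∞) ^ d) ^ 2 *
            (nrmPow d (1 - d) z * nrmPow d (2 - d) z * nrmPow d (2 - d) z) := by ring
      _ = K ^ 2 * (M : ℝ≥0∞) ^ 8 *
            ((M : ℝ≥0∞) ^ (2 * d - 8) * nrmPow d (5 - 3 * d) z) := by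
          rw [hM, nrmPow_mul_nrmPow, nrmPow_mul_nrmPow,
            show (1 - d : ℝ) + (2 - d) + (2 - d) = 5 - 3 * d by ring]
          ring
      _ ≤ K ^ 2 * (M : ℝ≥0∞) ^ 8 * nrmPow d (-d - 3) z := by
          rw [← hexp]
          gcongr
          exact natCast_pow_mul_nrmPow_le hzM _ _
  calc ∑' z : ↥((box d M : Set (Fin d → ℤ))ᶜ),
        nrmPow d (1 - d) z * boxPotential d (2 - d) (2 * n) z ^ 2
      ≤ ∑' z : ↥((box d M : Set (Fin d → ℤ))ᶜ),
          K ^ 2 * (M : ℝ≥0∞) ^ 8 * nrmPow d (-d - 3) z :=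
        ENNReal.tsum_le_tsum fun z => hpoint z z.2
    _ ≤ K ^ 2 * (M : ℝ≥0∞) ^ 8 * ∑' v, nrmPow d (-d - 3) v := by
        rw [ENNReal.tsum_mul_left]
        gcongr
        exact ENNReal.tsum_comp_le_tsum_of_injective Subtype.val_injective _

end LatticeBox

open LatticeBox

/-- For `d ≥ 9` there is `C > 0` such that for all `n ≥ 1`,
`∑_{x,y ∈ B(2n)} ∑_{z ∈ ℤ^d} ‖z‖^{1−d} ‖z−x‖^{2−d} ‖z−y‖^{2−d} ≤ C n⁸`
(ℓ∞ norms, with `‖0‖^a = 1`). -/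
theorem stmt12 (d : ℕ) (hd : 9 ≤ d) :
    ∃ C : ℝ, 0 < C ∧ ∀ n : ℕ, 1 ≤ n →
      (∑ x ∈ (Finset.Icc (fun _ => -(2 * n : ℤ)) (fun _ => (2 * n : ℤ)) :
            Finset (Fin d → ℤ)),
        ∑ y ∈ (Finset.Icc (fun _ => -(2 * n : ℤ)) (fun _ => (2 * n : ℤ)) :
            Finset (Fin d → ℤ)),
          ∑' z : Fin d → ℤ,
            nrmPow d (1 - (d : ℝ)) z * nrmPow d (2 - (d : ℝ)) (z - x) *
              nrmPow d (2 - (d : ℝ)) (z - y)) ≤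
        ENNReal.ofReal (C * (n : ℝ) ^ 8) := by
  set A : ℝ≥0∞ := 8 * 27 ^ d * 7 ^ 8 +
    ENNReal.ofReal (2 ^ (d - 2 : ℝ)) ^ 2 * 5 ^ 8 * ∑' v, nrmPow d (-d - 3) v
  have hA : A ≠ ⊤ := by
    have := tsum_nrmPow_ne_top (d := d) (a := -d - 3) (by linarith)
    finiteness
  refine ⟨A.toReal, ENNReal.toReal_pos (by positivity) hA, fun n hn => ?_⟩
  have hbox : (Icc (fun _ => -(2 * n : ℤ)) (fun _ => (2 * n : ℤ)) : Finset (Fin d → ℤ)) =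
      LatticeBox.box d (2 * n) := by
    unfold LatticeBox.box; push_cast; rfl
  have h₅ : ((4 * n + 1 : ℕ) : ℝ≥0∞) ≤ 5 * n := by
    exact_mod_cast (by omega : 4 * n + 1 ≤ 5 * n)
  rw [hbox, ENNReal.ofReal_mul ENNReal.toReal_nonneg, ENNReal.ofReal_toReal hA,
    ENNReal.ofReal_pow (Nat.cast_nonneg n), ENNReal.ofReal_natCast]
  calc _ = ∑' z, nrmPow d (1 - d) z * boxPotential d (2 - d) (2 * n) z ^ 2 :=
        sum_sum_tsum_mul_eq _ _ fun x z => nrmPow d (2 - d) (z - x)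
    _ = _ := (ENNReal.sum_add_tsum_compl (LatticeBox.box d (4 * n + 1)) _).symm
    _ ≤ 8 * 27 ^ d * 7 ^ 8 * (n : ℝ≥0∞) ^ 8 + ENNReal.ofReal (2 ^ (d - 2 : ℝ)) ^ 2 *
          ((4 * n + 1 : ℕ) : ℝ≥0∞) ^ 8 * ∑' v, nrmPow d (-d - 3) v :=
        add_le_add (sum_box_nrmPow_mul_boxPotential_sq_le hn)
          (tsum_compl_box_nrmPow_mul_boxPotential_sq_le (by omega) n)
    _ ≤ A * (n : ℝ≥0∞) ^ 8 := by
        rw [show A * (n : ℝ≥0∞) ^ 8 = 8 * 27 ^ d * 7 ^ 8 * (n : ℝ≥0∞) ^ 8 +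
          ENNReal.ofReal (2 ^ (d - 2 : ℝ)) ^ 2 * (5 * n) ^ 8 * ∑' v, nrmPow d (-d - 3) v by
          ring]
        gcongr
end
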